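/- Let H be a Hopf algebra over ℂ and T ∈ H a primitive element, i.e., Δ(T) = T⊗1 + 1⊗T. Then for every c ∈ ℂ and m ∈ ℕ, Δ(T^{[m]}) = Σ_{i=0}^{m} binom(m,i) · T_{−c}^{[i]} ⊗ T_c^{[m−i]}, where T_c^{[r]} = (T+c)(T+c−1)⋯(T+c−r+1) and T^{[m]} = T_0^{[m]}. -/
import Mathlib

noncomputable def fall {A : Type*} [Ring A] [Algebra ℂ A] (x : A) (a : ℂ) : ℕ → A
  | 0 => 1
  | r + 1 => fall x a r * (x + algebraMap ℂ A (a - r))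

section Aux

variable {A B : Type*} [Ring A] [Algebra ℂ A] [Ring B] [Algebra ℂ B]

lemma map_fall (f : A →ₐ[ℂ] B) (x : A) (a : ℂ) (r : ℕ) :
    f (fall x a r) = fall (f x) a r := by
  induction r with
  | zero => simp [fall]
  | succ n ih => simp [fall, map_mul, map_add, ih, AlgHom.commutes]

lemma commute_fall {x y : A} (h : Commute x y) (a : ℂ) (r : ℕ) :
    Commute x (fall y a r) := by
  induction r with
  | zero => simp [fall]
  | succ n ih =>
    rw [fall]
    exact ih.mul_right (h.add_right (Algebra.commute_algebraMap_right _ _))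

lemma key {x y : A} (h : Commute x y) (c : ℂ) (i j : ℕ) :
    fall x (-c) i * fall y c j * (x + y + algebraMap ℂ A (-(i : ℂ) - j)) =
      fall x (-c) (i + 1) * fall y c j + fall x (-c) i * fall y c (j + 1) := by
  have hc : Commute x (fall y c j) := commute_fall h c j
  have e1 : fall x (-c) i * fall y c j * x = fall x (-c) i * x * fall y c j := by
    rw [mul_assoc, ← hc.eq, mul_assoc]
  have e2 : ∀ (z : A) (a : ℂ), z * algebraMap ℂ A a = algebraMap ℂ A a * z :=
    fun z a => (Algebra.commutes a z).symm
  rw [show fall x (-c) (i+1) = fall x (-c) i * (x + algebraMap ℂ A (-c - i)) from rfl,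
      show fall y c (j+1) = fall y c j * (y + algebraMap ℂ A (c - j)) from rfl]
  rw [mul_add, mul_add, e1,
      show (-(i:ℂ) - j) = (-c - i) + (c - j) by ring, map_add, mul_add,
      mul_assoc (fall x (-c) i) (fall y c j) (algebraMap ℂ A (-c - i)),
      e2 (fall y c j) (-c - i), ← mul_assoc (fall x (-c) i) (algebraMap ℂ A (-c - i)),
      mul_add (fall x (-c) i) x (algebraMap ℂ A (-c - i)), add_mul,
      mul_add (fall y c j) y (algebraMap ℂ A (c - j)),
      mul_add (fall x (-c) i) (fall y c j * y),
      mul_assoc (fall x (-c) i) (fall y c j) y,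
      mul_assoc (fall x (-c) i) (fall y c j) (algebraMap ℂ A (c - j))]
  abel

lemma fall_add_comm {x y : A} (h : Commute x y) (c : ℂ) (m : ℕ) :
    fall (x + y) 0 m = ∑ i ∈ Finset.range (m + 1),
      (m.choose i : ℂ) • (fall x (-c) i * fall y c (m - i)) := by
  induction m with
  | zero => simp [fall]
  | succ m ih =>
    rw [show fall (x+y) 0 (m+1) = fall (x+y) 0 m * (x + y + algebraMap ℂ A (0 - m)) from rfl,
        ih, Finset.sum_mul]
    have lhs_eq : ∀ i ∈ Finset.range (m + 1),
        ((m.choose i : ℂ) • (fall x (-c) i * fall y c (m - i))) * (x + y + algebraMap ℂ A (0 - m)) =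
          (m.choose i : ℂ) • (fall x (-c) (i+1) * fall y c (m - i))
            + (m.choose i : ℂ) • (fall x (-c) i * fall y c (m + 1 - i)) := by
      intro i hi
      have hi' : i ≤ m := Nat.lt_succ_iff.mp (Finset.mem_range.mp hi)
      have hcast : (0 : ℂ) - m = -(i : ℂ) - ((m - i : ℕ) : ℂ) := by
        rw [Nat.cast_sub hi']; ring
      have hnat : m - i + 1 = m + 1 - i := by omega
      rw [smul_mul_assoc, hcast, key h c i (m - i), hnat, smul_add]
    rw [Finset.sum_congr rfl lhs_eq, Finset.sum_add_distrib]
    -- RHS manipulation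
    rw [Finset.sum_range_succ' (fun i => ((m+1).choose i : ℂ) •
      (fall x (-c) i * fall y c (m + 1 - i))) (m+1)]
    have split : ∀ i ∈ Finset.range (m + 1),
        (((m+1).choose (i+1) : ℂ)) • (fall x (-c) (i+1) * fall y c (m + 1 - (i+1))) =
          (m.choose i : ℂ) • (fall x (-c) (i+1) * fall y c (m - i))
            + (m.choose (i+1) : ℂ) • (fall x (-c) (i+1) * fall y c (m - i)) := by
      intro i hi
      rw [Nat.choose_succ_succ, Nat.cast_add, add_smul, Nat.succ_sub_succ]
    rw [Finset.sum_congr rfl split, Finset.sum_add_distrib, add_assoc]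
    congr 1
    -- remaining: S2' = Σ C(m,i+1)•A_i + term0
    rw [Finset.sum_range_succ' (fun i => (m.choose i : ℂ) •
      (fall x (-c) i * fall y c (m + 1 - i))) m,
      Finset.sum_range_succ (fun i => (m.choose (i+1) : ℂ) •
      (fall x (-c) (i+1) * fall y c (m - i))) m]
    simp only [Nat.succ_sub_succ, Nat.choose_succ_self, Nat.cast_zero, zero_smul, add_zero,
      Nat.choose_zero_right, Nat.cast_one, one_smul, Nat.sub_zero]

end Aux

open TensorProduct in
theorem comul_fall {H : Type*} [Ring H] [HopfAlgebra ℂ H] (T : H)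
    (hT : Coalgebra.comul (R := ℂ) T = T ⊗ₜ[ℂ] 1 + 1 ⊗ₜ[ℂ] T) (c : ℂ) (m : ℕ) :
    Coalgebra.comul (R := ℂ) (fall T 0 m) =
      ∑ i ∈ Finset.range (m + 1),
        (m.choose i : ℂ) • (fall T (-c) i ⊗ₜ[ℂ] fall T c (m - i)) := by
  have hmap : Coalgebra.comul (R := ℂ) (fall T 0 m)
      = fall (Coalgebra.comul (R := ℂ) T) 0 m := by
    have := map_fall (Bialgebra.comulAlgHom ℂ H) T 0 m
    simpa [Bialgebra.comulAlgHom_apply] using this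
  have hcomm : Commute (T ⊗ₜ[ℂ] (1 : H)) ((1 : H) ⊗ₜ[ℂ] T) := by
    unfold Commute SemiconjBy
    simp [Algebra.TensorProduct.tmul_mul_tmul]
  rw [hmap, hT, fall_add_comm hcomm c m]
  refine Finset.sum_congr rfl fun i hi => ?_
  congr 1
  have h1 : fall (T ⊗ₜ[ℂ] (1:H)) (-c) i = (fall T (-c) i) ⊗ₜ[ℂ] (1:H) := by
    simpa using (map_fall (Algebra.TensorProduct.includeLeft (R := ℂ) (S := ℂ) (A := H) (B := H))
      T (-c) i).symm
  have h2 : fall ((1:H) ⊗ₜ[ℂ] T) c (m - i) = (1:H) ⊗ₜ[ℂ] fall T c (m - i) := by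
    simpa using (map_fall (Algebra.TensorProduct.includeRight (R := ℂ) (A := H) (B := H))
      T c (m - i)).symm
  rw [h1, h2, Algebra.TensorProduct.tmul_mul_tmul, one_mul, mul_one]
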